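/- arXiv:1102.3858 — 2 statements merged into one kernel-verified Lean document; each statement's English description precedes it below -/
import Mathlib

section
/- Let g, h ∈ ℂ⟦X⟧ be formal power series over ℂ, and assume the constant coefficient of g equals −1. Then there exists a formal power series w ∈ ℂ⟦X⟧ with nonzero constant coefficient satisfying X·w'' + g·w' + h·w = 0 (where w' and w'' denote the first and second formal derivatives of w) if and only if (h_0 + g_1)·h_0 + h_1 = 0, where g_1 is the coefficient of X in g, and h_0, h_1 are the constant coefficient and the coefficient of X in h. -/
open PowerSeries Finset

noncomputable def solC (g h : PowerSeries ℂ) : ℕ → ℂ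
  | 0 => 1
  | 1 => constantCoeff h
  | 2 => 0
  | (m+3) =>
    -((∑ i ∈ (Finset.range (m+2)).attach,
        coeff (i.1+1) g * ((m+2-i.1 : ℕ) : ℂ) * solC g h (m+2-i.1))
      + ∑ i ∈ (Finset.range (m+3)).attach,
        coeff i.1 h * solC g h (m+2-i.1))
      / ((m+3)*(m+1))
  decreasing_by all_goals omega

lemma solC_succ (g h : PowerSeries ℂ) (m : ℕ) :
    ((m+3)*(m+1) : ℂ) * solC g h (m+3) =
      -((∑ i ∈ Finset.range (m+2),
          coeff (i+1) g * ((m+2-i : ℕ) : ℂ) * solC g h (m+2-i))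
        + ∑ i ∈ Finset.range (m+3), coeff i h * solC g h (m+2-i)) := by
  rw [solC, Finset.sum_attach (Finset.range (m+2))
      (fun i => coeff (i+1) g * ((m+2-i : ℕ) : ℂ) * solC g h (m+2-i)),
    Finset.sum_attach (Finset.range (m+3)) (fun i => coeff i h * solC g h (m+2-i))]
  have h1 : ((m:ℂ)+3) ≠ 0 := by
    exact_mod_cast Nat.cast_ne_zero (R := ℂ).2 (by omega : m+3 ≠ 0)
  have h2 : ((m:ℂ)+1) ≠ 0 := by
    exact_mod_cast Nat.cast_ne_zero (R := ℂ).2 (by omega : m+1 ≠ 0)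
  field_simp

lemma main_eq (g h : PowerSeries ℂ) (hg : constantCoeff g = -1)
    (key : (constantCoeff h + coeff 1 g) * constantCoeff h + coeff 1 h = 0) :
    X * (derivative ℂ (derivative ℂ (PowerSeries.mk (solC g h))))
      + g * derivative ℂ (PowerSeries.mk (solC g h))
      + h * PowerSeries.mk (solC g h) = 0 := by
  ext n
  rw [map_zero, map_add, map_add]
  match n with
  | 0 =>
    simp only [coeff_mul, Finset.Nat.antidiagonal_zero, Finset.sum_singleton,
      coeff_derivative, coeff_mk, coeff_zero_X, zero_mul, coeff_zero_eq_constantCoeff,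
      map_mul, constantCoeff_X, constantCoeff_mk, hg]
    simp [solC]
  | 1 =>
    rw [coeff_succ_X_mul]
    simp only [coeff_mul, Finset.Nat.antidiagonal_succ, Finset.Nat.antidiagonal_zero,
      Finset.sum_insert, Finset.sum_singleton, Finset.sum_cons, Finset.sum_map,
      Function.Embedding.coeFn_mk, Function.Embedding.prodMap, Prod.map, Function.Embedding.refl_apply,
      coeff_derivative, coeff_mk, coeff_zero_eq_constantCoeff, constantCoeff_mk, hg]
    have s1 : solC g h 1 = constantCoeff h := by simp [solC]
    have s2 : solC g h (0+1+1) = 0 := by simp [solC]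
    have s2' : solC g h (1+1) = 0 := by simp [solC]
    have s0 : solC g h 0 = 1 := by simp [solC]
    have s1' : solC g h (0+1) = constantCoeff h := by simp [solC]
    simp only [s1, s2, s2', s0, s1', Nat.cast_zero]
    push_cast
    linear_combination key
  | (m+2) =>
    rw [coeff_succ_X_mul]
    rw [coeff_derivative, coeff_derivative, coeff_mk]
    rw [coeff_mul, coeff_mul, Finset.Nat.sum_antidiagonal_eq_sum_range_succ_mk,
      Finset.Nat.sum_antidiagonal_eq_sum_range_succ_mk]
    simp only [coeff_derivative, coeff_mk]
    rw [Finset.sum_range_succ'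
      (fun k => coeff k g * (solC g h (m+2-k+1) * ((m+2-k : ℕ)+1)))]
    have hA : ∑ i ∈ Finset.range (m+2),
        coeff (i+1) g * (solC g h (m+2-(i+1)+1) * ((m+2-(i+1) : ℕ)+1))
        = ∑ i ∈ Finset.range (m+2),
        coeff (i+1) g * ((m+2-i : ℕ) : ℂ) * solC g h (m+2-i) := by
      apply Finset.sum_congr rfl
      intro i hi
      rw [Finset.mem_range] at hi
      have e1 : m+2-(i+1)+1 = m+2-i := by omega
      have e2 : ((m+2-(i+1) : ℕ) : ℂ) + 1 = ((m+2-i : ℕ) : ℂ) := by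
        have e3 : (m+2-(i+1)) + 1 = m+2-i := by omega
        exact_mod_cast congrArg (Nat.cast : ℕ → ℂ) e3
      rw [e1, e2]; ring
    rw [hA]
    simp only [Nat.sub_zero, coeff_zero_eq_constantCoeff, hg,
      show m+1+1+1 = m+3 from rfl, show m+2+1 = m+3 from rfl, Nat.succ_eq_add_one]
    have h0 := solC_succ g h m
    push_cast at h0 ⊢
    linear_combination h0

/-- **The Lemma of the paper, in formal power series form.**
Let `g, h ∈ ℂ⟦X⟧` with constant coefficient of `g` equal to `-1`.  Then there exists a formal
power series `w` with nonzero constant coefficient satisfying `X * w'' + g * w' + h * w = 0`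
if and only if `(h₀ + g₁) * h₀ + h₁ = 0`, where `g₁` is the coefficient of `X` in `g` and
`h₀, h₁` are the constant coefficient and the coefficient of `X` in `h`. -/
theorem exists_powerSeries_solution_iff
    (g h : PowerSeries ℂ) (hg : constantCoeff g = -1) :
    (∃ w : PowerSeries ℂ, constantCoeff w ≠ 0 ∧
        X * (derivative ℂ (derivative ℂ w)) + g * (derivative ℂ w) + h * w = 0) ↔
      (constantCoeff h + coeff 1 g) * constantCoeff h + coeff 1 h = 0 := by
  constructor
  · rintro ⟨w, hw0, hw⟩
    have e0 := congrArg (coeff 0) hw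
    have e1 := congrArg (coeff 1) hw
    simp only [map_add, map_zero, coeff_mul, Finset.Nat.antidiagonal_zero,
      Finset.Nat.antidiagonal_succ, Finset.sum_singleton, Finset.sum_cons, Finset.sum_map,
      Function.Embedding.coeFn_mk, Function.Embedding.prodMap, Prod.map,
      Function.Embedding.refl_apply, coeff_derivative, coeff_zero_eq_constantCoeff,
      map_mul, constantCoeff_X, zero_mul, coeff_one_X, coeff_zero_X, one_mul, hg] at e0 e1
    have key : ((constantCoeff h + coeff 1 g) * constantCoeff h + coeff 1 h)
        * constantCoeff w = 0 := by
      push_cast at e0 e1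
      linear_combination e1 + (constantCoeff h + coeff 1 g) * e0
    rcases mul_eq_zero.1 key with k | k
    · exact k
    · exact absurd k hw0
  · intro key
    refine ⟨PowerSeries.mk (solC g h), ?_, main_eq g h hg key⟩
    have s0 : solC g h 0 = 1 := by simp [solC]
    simp [s0]
end

section
/- Let n ≥ 3, let N > n−2 be a natural number, and let t_1, …, t_n, q_1, …, q_N be pairwise distinct complex numbers. Fix complex numbers c, β_1, …, β_n, and for each j ∈ {1, …, N} fix complex numbers a_j, b_j, e_j with a_j ≠ 0 and e_j ≠ 0. Then there exist complex polynomials Q_{n−1}, …, Q_N in the variables p_1, …, p_N, each of total degree ≤ 2, such that: (i) for each j ∈ {n−1, …, N}, the coefficient of p_j² in Q_j is nonzero, Q_j contains no monomial p_l² for any l ∈ {n−1, …, N} with l ≠ j, and Q_j contains no mixed monomial p_k·p_l with k ≠ l; and (ii) for every (p_1, …, p_N) ∈ ℂ^N, there exists a polynomial H of degree ≤ 2(n+N−1) with the coefficient of z^{2(n+N−1)} in H equal to c, H(t_i) = β_i for i = 1, …, n, and H(q_j) = 0, H'(q_j) = e_j p_j, H''(q_j) = a_j p_j² + b_j p_j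 for j = 1, …, N, if and only if Q_j(p_1, …, p_N) = 0 for every j ∈ {n−1, …, N}. -/
open Polynomial


section OverdeterminedAux
variable {n N : ℕ}

lemma deg_le_of_lt_succ (p : Polynomial ℂ) (d : ℕ) (h : p.degree < ((d + 1 : ℕ) : WithBot ℕ)) :
    p.degree ≤ (d : WithBot ℕ) := by
  rcases eq_or_ne p 0 with rfl | hp
  · simp
  · rw [degree_eq_natDegree hp] at h ⊢
    exact_mod_cast Nat.lt_succ_iff.mp (by exact_mod_cast h)


-- injectivity core: a polynomial satisfying homogeneous conditions vanishes
lemma interp_inj (n N : ℕ) (hn : 3 ≤ n) (hN : n - 2 < N)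
    (t : Fin n → ℂ) (q : Fin N → ℂ)
    (ht : Function.Injective t) (hq : Function.Injective q)
    (htq : ∀ i j, t i ≠ q j)
    (H : Polynomial ℂ) (hdeg : H.degree < ((2 * (n + N - 1) + 1 : ℕ) : WithBot ℕ))
    (h0 : H.coeff (2 * (n + N - 1)) = 0)
    (hti : ∀ i, H.eval (t i) = 0)
    (hqv : ∀ j, H.eval (q j) = 0)
    (hqd : ∀ j, (derivative H).eval (q j) = 0)
    (hqdd : ∀ j : Fin N, (j : ℕ) < n - 2 → (derivative (derivative H)).eval (q j) = 0) :
    H = 0 := by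
  by_contra hne
  set D := 2 * (n + N - 1) with hD
  -- root data
  set r : Fin n ⊕ Fin N → ℂ := Sum.elim t q with hr
  set μ : Fin n ⊕ Fin N → ℕ := Sum.elim (fun _ => 1)
    (fun j => if (j : ℕ) < n - 2 then 3 else 2) with hμ
  have hrinj : Function.Injective r := by
    rintro (i | i) (j | j) h <;> simp only [hr, Sum.elim_inl, Sum.elim_inr] at h
    · exact congrArg Sum.inl (ht h)
    · exact absurd h (htq i j)
    · exact absurd h.symm (htq j i)
    · exact congrArg Sum.inr (hq h)
  have hdvd : ∀ i, (X - C (r i)) ^ (μ i) ∣ H := by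
    rintro (i | j)
    · simpa [hμ, hr] using dvd_iff_isRoot.mpr (hti i)
    · have key : μ (Sum.inr j) - 1 < H.rootMultiplicity (q j) := by
        rw [Polynomial.lt_rootMultiplicity_iff_isRoot_iterate_derivative hne]
        intro m hm
        simp only [hμ, Sum.elim_inr] at hm
        split_ifs at hm with hc
        · interval_cases m
          · exact hqv j
          · exact hqd j
          · exact hqdd j hc
        · interval_cases m
          · exact hqv j
          · exact hqd j
      calc (X - C (r (Sum.inr j))) ^ μ (Sum.inr j)
          ∣ (X - C (q j)) ^ H.rootMultiplicity (q j) := by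
            apply pow_dvd_pow
            omega
        _ ∣ H := Polynomial.pow_rootMultiplicity_dvd H (q j)
  have hpair : Pairwise (Function.onFun IsCoprime fun i => (X - C (r i)) ^ (μ i)) := by
    intro i j hij
    exact ((Polynomial.pairwise_coprime_X_sub_C hrinj hij).pow)
  have hProd : (∏ i, (X - C (r i)) ^ (μ i)) ∣ H := Fintype.prod_dvd_of_coprime hpair hdvd
  -- degree count
  have hmonic : (∏ i, (X - C (r i)) ^ (μ i)).Monic :=
    monic_prod_of_monic _ _ fun i _ => (monic_X_sub_C (r i)).pow _
  have hcard : (Finset.univ.filter fun j : Fin N => (j : ℕ) < n - 2).card = n - 2 := by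
    have : (Finset.univ.filter fun j : Fin N => (j : ℕ) < n - 2)
        = Finset.map (Fin.castLEEmb hN.le) Finset.univ := by
      ext j
      simp only [Finset.mem_filter, Finset.mem_univ, true_and, Finset.mem_map,
        Fin.castLEEmb, Function.Embedding.coeFn_mk]
      constructor
      · intro hj; exact ⟨⟨(j : ℕ), hj⟩, by simp [Fin.castLE, Fin.ext_iff]⟩
      · rintro ⟨i, rfl⟩; exact i.2
    rw [this, Finset.card_map, Finset.card_univ, Fintype.card_fin]
  have hdegP : (∏ i, (X - C (r i)) ^ (μ i)).natDegree = D := by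
    rw [natDegree_prod_of_monic _ _ fun i _ => (monic_X_sub_C (r i)).pow _]
    have : ∀ i, ((X - C (r i)) ^ (μ i)).natDegree = μ i := by
      intro i; rw [natDegree_pow, natDegree_X_sub_C, mul_one]
    simp only [this]
    rw [Fintype.sum_sum_type]
    have h1 : ∑ i : Fin n, μ (Sum.inl i) = n := by simp [hμ]
    have h2 : ∑ j : Fin N, μ (Sum.inr j) = 2 * N + (n - 2) := by
      simp only [hμ, Sum.elim_inr]
      rw [Finset.sum_ite, Finset.sum_const, Finset.sum_const, hcard]
      have : (Finset.univ.filter fun j : Fin N => ¬ (j : ℕ) < n - 2).card = N - (n - 2) := by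
        rw [Finset.filter_not, Finset.card_sdiff_of_subset (Finset.filter_subset _ _), hcard,
          Finset.card_univ, Fintype.card_fin]
      rw [this]
      simp only [smul_eq_mul]
      omega
    rw [h1, h2]
    omega
  have hHdeg : H.natDegree < D := by
    have h1 : H.natDegree < D + 1 := by
      rw [Polynomial.natDegree_lt_iff_degree_lt hne]
      exact_mod_cast hdeg
    rcases lt_or_eq_of_le (Nat.lt_succ_iff.mp h1) with h | h
    · exact h
    · exfalso
      have : H.coeff D ≠ 0 := by
        rw [← h]; exact Polynomial.leadingCoeff_ne_zero.mpr hne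
      exact this h0
  exact hne (Polynomial.eq_zero_of_dvd_of_natDegree_lt hProd (hdegP ▸ hHdeg))


noncomputable def philm (n N : ℕ) (h : n - 2 ≤ N) (t : Fin n → ℂ) (q : Fin N → ℂ) :
    Polynomial ℂ →ₗ[ℂ] ((Unit ⊕ Fin n ⊕ Fin N ⊕ Fin N ⊕ Fin (n - 2)) → ℂ) :=
  LinearMap.pi (Sum.elim (fun _ => lcoeff ℂ (2 * (n + N - 1)))
    (Sum.elim (fun i => leval (t i))
      (Sum.elim (fun j => leval (q j))
        (Sum.elim (fun j => (leval (q j)).comp derivative)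
          (fun j => (leval (q (Fin.castLE h j))).comp (derivative.comp derivative))))))

lemma philm_apply (n N : ℕ) (h : n - 2 ≤ N) (t : Fin n → ℂ) (q : Fin N → ℂ) (H : Polynomial ℂ) :
    philm n N h t q H = Sum.elim (fun _ => H.coeff (2 * (n + N - 1)))
      (Sum.elim (fun i => H.eval (t i))
        (Sum.elim (fun j => H.eval (q j))
          (Sum.elim (fun j => (derivative H).eval (q j))
            (fun j => (derivative (derivative H)).eval (q (Fin.castLE h j)))))) := by
  funext i
  rcases i with _ | i | j | j | j <;> rfl



lemma interp (n N : ℕ) (hn : 3 ≤ n) (hN : n - 2 < N)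
    (t : Fin n → ℂ) (q : Fin N → ℂ)
    (ht : Function.Injective t) (hq : Function.Injective q)
    (htq : ∀ i j, t i ≠ q j) :
    ∃ R : ((Unit ⊕ Fin n ⊕ Fin N ⊕ Fin N ⊕ Fin (n - 2)) → ℂ) →ₗ[ℂ] Polynomial ℂ,
      (∀ v, (R v).degree < ((2 * (n + N - 1) + 1 : ℕ) : WithBot ℕ) ∧
        philm n N hN.le t q (R v) = v) ∧
      (∀ (H : Polynomial ℂ) v, H.degree < ((2 * (n + N - 1) + 1 : ℕ) : WithBot ℕ) →
        philm n N hN.le t q H = v → H = R v) := by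
  classical
  set D := 2 * (n + N - 1) with hD
  set ι := (Unit ⊕ Fin n ⊕ Fin N ⊕ Fin N ⊕ Fin (n - 2)) with hι
  let Φ : degreeLT ℂ (D + 1) →ₗ[ℂ] (ι → ℂ) :=
    (philm n N hN.le t q).comp (degreeLT ℂ (D + 1)).subtype
  have hinj : Function.Injective Φ := by
    rw [← LinearMap.ker_eq_bot, LinearMap.ker_eq_bot']
    rintro ⟨H, hH⟩ h0
    have hmem := Polynomial.mem_degreeLT.mp hH
    have hphi : philm n N hN.le t q H = 0 := h0
    rw [philm_apply] at hphi
    have hc : ∀ i : ι, (Sum.elim (fun _ => H.coeff (2 * (n + N - 1)))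
      (Sum.elim (fun i => H.eval (t i))
        (Sum.elim (fun j => H.eval (q j))
          (Sum.elim (fun j => (derivative H).eval (q j))
            (fun j => (derivative (derivative H)).eval (q (Fin.castLE hN.le j))))))) i = 0 :=
      fun i => congrFun hphi i
    have hzero : H = 0 := by
      apply interp_inj n N hn hN t q ht hq htq H (by exact_mod_cast hmem)
      · exact hc (Sum.inl ())
      · exact fun i => hc (Sum.inr (Sum.inl i))
      · exact fun j => hc (Sum.inr (Sum.inr (Sum.inl j)))
      · exact fun j => hc (Sum.inr (Sum.inr (Sum.inr (Sum.inl j))))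
      · intro j hj
        have := hc (Sum.inr (Sum.inr (Sum.inr (Sum.inr ⟨(j : ℕ), hj⟩))))
        simpa [Fin.castLE, Fin.ext_iff] using this
    exact Subtype.ext hzero
  have hfd : FiniteDimensional ℂ (degreeLT ℂ (D + 1)) :=
    Module.Finite.equiv (Polynomial.degreeLTEquiv ℂ (D + 1)).symm
  have hrank : Module.finrank ℂ (degreeLT ℂ (D + 1)) = Module.finrank ℂ (ι → ℂ) := by
    rw [(Polynomial.degreeLTEquiv ℂ (D + 1)).finrank_eq]
    simp only [Module.finrank_pi, Fintype.card_fin, hι, Fintype.card_sum, Fintype.card_fin,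
      Fintype.card_unit]
    omega
  let E := Φ.linearEquivOfInjective hinj hrank
  refine ⟨(degreeLT ℂ (D + 1)).subtype.comp (E.symm : (ι → ℂ) →ₗ[ℂ] degreeLT ℂ (D + 1)), ?_, ?_⟩
  · intro v
    constructor
    · exact_mod_cast Polynomial.mem_degreeLT.mp (E.symm v).2
    · have : Φ (E.symm v) = v := by
        rw [← Φ.linearEquivOfInjective_apply hinj hrank]
        exact E.apply_symm_apply v
      exact this
  · intro H v hdeg hphi
    have hmem : H ∈ degreeLT ℂ (D + 1) := Polynomial.mem_degreeLT.mpr (by exact_mod_cast hdeg)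
    have h1 : Φ ⟨H, hmem⟩ = v := hphi
    have h2 : Φ (E.symm v) = v := by
      rw [← Φ.linearEquivOfInjective_apply hinj hrank]
      exact E.apply_symm_apply v
    have := hinj (h1.trans h2.symm)
    exact congrArg Subtype.val this



variable {n N : ℕ}

noncomputable def Fder (q : Fin N → ℂ) (j : Fin N) : Polynomial ℂ →ₗ[ℂ] ℂ :=
  (leval (q j)).comp (derivative.comp derivative)

lemma Fder_apply (q : Fin N → ℂ) (j : Fin N) (P : Polynomial ℂ) :
    Fder q j P = (derivative (derivative P)).eval (q j) := rfl

def d0vec (c : ℂ) (β : Fin n → ℂ) : (Unit ⊕ Fin n ⊕ Fin N ⊕ Fin N ⊕ Fin (n - 2)) → ℂ :=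
  Sum.elim (fun _ => c) (Sum.elim β (Sum.elim (fun _ => 0) (Sum.elim (fun _ => 0) (fun _ => 0))))

def vvec (e : Fin N → ℂ) (k : Fin N) : (Unit ⊕ Fin n ⊕ Fin N ⊕ Fin N ⊕ Fin (n - 2)) → ℂ :=
  Sum.elim (fun _ => 0) (Sum.elim (fun _ => 0) (Sum.elim (fun _ => 0)
    (Sum.elim (fun j => if j = k then e k else 0) (fun _ => 0))))

def wvec (l : Fin (n - 2)) : (Unit ⊕ Fin n ⊕ Fin N ⊕ Fin N ⊕ Fin (n - 2)) → ℂ :=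
  Sum.elim (fun _ => 0) (Sum.elim (fun _ => 0) (Sum.elim (fun _ => 0)
    (Sum.elim (fun _ => 0) (fun j => if j = l then 1 else 0))))

def dvec (hle : n - 2 ≤ N) (c : ℂ) (β : Fin n → ℂ) (a b e : Fin N → ℂ) (p : Fin N → ℂ) :
    (Unit ⊕ Fin n ⊕ Fin N ⊕ Fin N ⊕ Fin (n - 2)) → ℂ :=
  Sum.elim (fun _ => c) (Sum.elim β (Sum.elim (fun _ => 0)
    (Sum.elim (fun j => e j * p j)
      (fun j => a (Fin.castLE hle j) * p (Fin.castLE hle j) ^ 2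
        + b (Fin.castLE hle j) * p (Fin.castLE hle j)))))

lemma dvec_decomp (hle : n - 2 ≤ N) (c : ℂ) (β : Fin n → ℂ) (a b e : Fin N → ℂ)
    (p : Fin N → ℂ) :
    dvec hle c β a b e p = d0vec c β + (∑ k, p k • vvec e k)
      + ∑ l : Fin (n - 2),
          (a (Fin.castLE hle l) * p (Fin.castLE hle l) ^ 2
            + b (Fin.castLE hle l) * p (Fin.castLE hle l)) • wvec l := by
  funext i
  rcases i with _ | i | i | i | i <;>
    simp [d0vec, vvec, wvec, dvec, Finset.sum_apply, mul_ite, mul_zero,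
      Finset.sum_ite_eq, mul_comm]



section QAux2

variable {n N : ℕ}

/-- the quadratic compatibility polynomial in explicit form -/
noncomputable def Qpoly (hle : n - 2 ≤ N) (a b : Fin N → ℂ)
    (α : ℂ) (γ : Fin N → ℂ) (δ : Fin (n - 2) → ℂ) (j : Fin N) :
    MvPolynomial (Fin N) ℂ :=
  MvPolynomial.C α
    + ∑ k, MvPolynomial.C (γ k) * MvPolynomial.X k
    + ∑ l : Fin (n - 2), MvPolynomial.C (δ l * a (Fin.castLE hle l))
        * MvPolynomial.X (Fin.castLE hle l) ^ 2
    + ∑ l : Fin (n - 2), MvPolynomial.C (δ l * b (Fin.castLE hle l))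
        * MvPolynomial.X (Fin.castLE hle l)
    + MvPolynomial.C (-(a j)) * MvPolynomial.X j ^ 2
    + MvPolynomial.C (-(b j)) * MvPolynomial.X j

lemma Qpoly_totalDegree (hle : n - 2 ≤ N) (a b : Fin N → ℂ) (α : ℂ) (γ : Fin N → ℂ)
    (δ : Fin (n - 2) → ℂ) (j : Fin N) :
    (Qpoly hle a b α γ δ j).totalDegree ≤ 2 := by
  have hCX : ∀ (x : ℂ) (k : Fin N), (MvPolynomial.C x * MvPolynomial.X k :
      MvPolynomial (Fin N) ℂ).totalDegree ≤ 2 := by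
    intro x k
    refine (MvPolynomial.totalDegree_mul _ _).trans ?_
    simp [MvPolynomial.totalDegree_X]
  have hCX2 : ∀ (x : ℂ) (k : Fin N), (MvPolynomial.C x * MvPolynomial.X k ^ 2 :
      MvPolynomial (Fin N) ℂ).totalDegree ≤ 2 := by
    intro x k
    refine (MvPolynomial.totalDegree_mul _ _).trans ?_
    have := MvPolynomial.totalDegree_pow (MvPolynomial.X k : MvPolynomial (Fin N) ℂ) 2
    simp only [MvPolynomial.totalDegree_C, zero_add]
    refine this.trans ?_
    simp [MvPolynomial.totalDegree_X]
  have hs1 : (∑ k, MvPolynomial.C (γ k) * MvPolynomial.X k :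
      MvPolynomial (Fin N) ℂ).totalDegree ≤ 2 :=
    (MvPolynomial.totalDegree_finset_sum _ _).trans (Finset.sup_le fun k _ => hCX _ k)
  have hs2 : (∑ l : Fin (n - 2), MvPolynomial.C (δ l * a (Fin.castLE hle l))
      * MvPolynomial.X (Fin.castLE hle l) ^ 2 : MvPolynomial (Fin N) ℂ).totalDegree ≤ 2 :=
    (MvPolynomial.totalDegree_finset_sum _ _).trans (Finset.sup_le fun l _ => hCX2 _ _)
  have hs3 : (∑ l : Fin (n - 2), MvPolynomial.C (δ l * b (Fin.castLE hle l))
      * MvPolynomial.X (Fin.castLE hle l) : MvPolynomial (Fin N) ℂ).totalDegree ≤ 2 :=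
    (MvPolynomial.totalDegree_finset_sum _ _).trans (Finset.sup_le fun l _ => hCX _ _)
  have h0 : (MvPolynomial.C α : MvPolynomial (Fin N) ℂ).totalDegree ≤ 2 := by
    simp [MvPolynomial.totalDegree_C]
  refine (MvPolynomial.totalDegree_add _ _).trans
    (max_le ((MvPolynomial.totalDegree_add _ _).trans
    (max_le ((MvPolynomial.totalDegree_add _ _).trans
    (max_le ((MvPolynomial.totalDegree_add _ _).trans
    (max_le ((MvPolynomial.totalDegree_add _ _).trans
    (max_le h0 hs1)) hs2)) hs3)) (hCX2 _ _))) (hCX _ _))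

lemma Qpoly_coeff_sq (hle : n - 2 ≤ N) (a b : Fin N → ℂ) (α : ℂ) (γ : Fin N → ℂ)
    (δ : Fin (n - 2) → ℂ) (j l : Fin N) (hl : n - 2 ≤ (l : ℕ)) :
    MvPolynomial.coeff (Finsupp.single l 2) (Qpoly hle a b α γ δ j)
      = if l = j then -(a j) else 0 := by
  classical
  have h2 : ¬ ((0 : Fin N →₀ ℕ) = Finsupp.single l 2) := by
    intro h
    exact two_ne_zero (Finsupp.single_eq_zero.mp h.symm)
  simp only [Qpoly, MvPolynomial.coeff_add, MvPolynomial.coeff_sum, MvPolynomial.coeff_C_mul,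
    MvPolynomial.coeff_C, MvPolynomial.coeff_X', MvPolynomial.coeff_X_pow, if_neg h2]
  have e1 : ∀ k : Fin N, k ∈ Finset.univ →
      γ k * (if Finsupp.single k 1 = Finsupp.single l 2 then (1 : ℂ) else 0) = 0 := by
    intro k _
    rw [if_neg (by simp [Finsupp.single_eq_single_iff]), mul_zero]
  have e2 : ∀ k : Fin (n - 2), k ∈ Finset.univ →
      δ k * a (Fin.castLE hle k) *
        (if Finsupp.single (Fin.castLE hle k) 2 = Finsupp.single l 2 then (1 : ℂ) else 0) = 0 := by
    intro k _
    rw [if_neg, mul_zero]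
    simp only [Finsupp.single_eq_single_iff]
    rintro (⟨h, -⟩ | ⟨h, -⟩)
    · have hk : ((Fin.castLE hle k : Fin N) : ℕ) = (k : ℕ) := rfl
      have hk2 := k.2
      have := congrArg (fun x : Fin N => (x : ℕ)) h
      simp only [hk] at this
      omega
    · omega
  have e3 : ∀ k : Fin (n - 2), k ∈ Finset.univ →
      δ k * b (Fin.castLE hle k) *
        (if Finsupp.single (Fin.castLE hle k) 1 = Finsupp.single l 2 then (1 : ℂ) else 0) = 0 := by
    intro k _
    rw [if_neg (by simp [Finsupp.single_eq_single_iff]), mul_zero]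
  rw [Finset.sum_eq_zero e1, Finset.sum_eq_zero e2, Finset.sum_eq_zero e3]
  have h1 : ¬ (Finsupp.single j 1 = Finsupp.single l 2) := by
    simp [Finsupp.single_eq_single_iff]
  rw [if_neg h1]
  have hiff : (Finsupp.single j 2 = Finsupp.single l 2) ↔ l = j := by
    simp [Finsupp.single_eq_single_iff, eq_comm]
  split_ifs with hc hd hd <;> simp_all

lemma Qpoly_coeff_mixed (hle : n - 2 ≤ N) (a b : Fin N → ℂ) (α : ℂ) (γ : Fin N → ℂ)
    (δ : Fin (n - 2) → ℂ) (j : Fin N) (k l : Fin N) (hkl : k ≠ l) :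
    MvPolynomial.coeff (Finsupp.single k 1 + Finsupp.single l 1)
      (Qpoly hle a b α γ δ j) = 0 := by
  classical
  set m : Fin N →₀ ℕ := Finsupp.single k 1 + Finsupp.single l 1 with hm
  have hmk : m k = 1 := by
    simp [hm, Finsupp.single_apply, Ne.symm hkl]
  have hml : m l = 1 := by
    simp [hm, Finsupp.single_apply, hkl]
  have hm0 : ¬ ((0 : Fin N →₀ ℕ) = m) := by
    intro h; rw [← h] at hmk; simp at hmk
  have hs1 : ∀ i : Fin N, ¬ (Finsupp.single i 1 = m) := by
    intro i h
    rcases eq_or_ne i k with hik | hik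
    · have := congrArg (fun f : Fin N →₀ ℕ => f l) h
      simp only [Finsupp.single_apply, hml] at this
      rw [if_neg (hik ▸ hkl)] at this
      exact one_ne_zero this.symm
    · have := congrArg (fun f : Fin N →₀ ℕ => f k) h
      simp only [Finsupp.single_apply, hmk] at this
      rw [if_neg hik] at this
      exact one_ne_zero this.symm
  have hs2 : ∀ i : Fin N, ¬ (Finsupp.single i 2 = m) := by
    intro i h
    rcases eq_or_ne i k with hik | hik
    · have := congrArg (fun f : Fin N →₀ ℕ => f k) h
      simp only [Finsupp.single_apply, hmk, if_pos hik] at this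
      omega
    · have := congrArg (fun f : Fin N →₀ ℕ => f k) h
      simp only [Finsupp.single_apply, hmk] at this
      rw [if_neg hik] at this
      exact one_ne_zero this.symm
  simp only [Qpoly, MvPolynomial.coeff_add, MvPolynomial.coeff_sum, MvPolynomial.coeff_C_mul,
    MvPolynomial.coeff_C, MvPolynomial.coeff_X', MvPolynomial.coeff_X_pow, if_neg hm0,
    if_neg (hs1 _), if_neg (hs2 _), mul_zero, Finset.sum_const_zero, add_zero, zero_add]

lemma Qpoly_eval (hle : n - 2 ≤ N) (a b : Fin N → ℂ) (α : ℂ) (γ : Fin N → ℂ)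
    (δ : Fin (n - 2) → ℂ) (j : Fin N) (p : Fin N → ℂ) :
    MvPolynomial.eval p (Qpoly hle a b α γ δ j)
      = α + ∑ k, γ k * p k
        + ∑ l : Fin (n - 2), δ l * a (Fin.castLE hle l) * p (Fin.castLE hle l) ^ 2
        + ∑ l : Fin (n - 2), δ l * b (Fin.castLE hle l) * p (Fin.castLE hle l)
        + (-(a j) * p j ^ 2) + (-(b j) * p j) := by
  simp [Qpoly]


end QAux2

lemma key_eval (hle : n - 2 ≤ N) (c : ℂ) (β : Fin n → ℂ) (a b e : Fin N → ℂ)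
    (q : Fin N → ℂ)
    (R : ((Unit ⊕ Fin n ⊕ Fin N ⊕ Fin N ⊕ Fin (n - 2)) → ℂ) →ₗ[ℂ] Polynomial ℂ)
    (p : Fin N → ℂ) (j : Fin N) :
    MvPolynomial.eval p (Qpoly hle a b (Fder q j (R (d0vec c β)))
        (fun k => Fder q j (R (vvec e k))) (fun l => Fder q j (R (wvec l))) j)
      = Fder q j (R (dvec hle c β a b e p)) - (a j * p j ^ 2 + b j * p j) := by
  have hlin : Fder q j (R (dvec hle c β a b e p))
      = Fder q j (R (d0vec c β)) + (∑ k, p k * Fder q j (R (vvec e k)))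
        + ∑ l : Fin (n - 2),
            (a (Fin.castLE hle l) * p (Fin.castLE hle l) ^ 2
              + b (Fin.castLE hle l) * p (Fin.castLE hle l)) * Fder q j (R (wvec l)) := by
    rw [dvec_decomp hle c β a b e p]
    simp only [map_add, map_sum, map_smul, smul_eq_mul]
  have h2 : ∑ k, Fder q j (R (vvec e k)) * p k = ∑ k, p k * Fder q j (R (vvec e k)) :=
    Finset.sum_congr rfl fun k _ => by ring
  have h3 : (∑ l : Fin (n - 2), Fder q j (R (wvec l)) * a (Fin.castLE hle l)
        * p (Fin.castLE hle l) ^ 2)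
      + ∑ l : Fin (n - 2), Fder q j (R (wvec l)) * b (Fin.castLE hle l) * p (Fin.castLE hle l)
      = ∑ l : Fin (n - 2),
          (a (Fin.castLE hle l) * p (Fin.castLE hle l) ^ 2
            + b (Fin.castLE hle l) * p (Fin.castLE hle l)) * Fder q j (R (wvec l)) := by
    rw [← Finset.sum_add_distrib]
    exact Finset.sum_congr rfl fun l _ => by ring
  rw [Qpoly_eval, hlin]
  linear_combination h2 + h3



end OverdeterminedAux

/-- **The overdetermined case `N > n - 2` of Section 4, in reduced polynomial form.**
Let `n ≥ 3`, `N > n - 2`, and let `t 1, …, t n, q 1, …, q N` be pairwise distinct complex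
numbers.  Fix `c`, `β i`, and for each `j` fix `a j ≠ 0`, `b j`, `e j ≠ 0`.  Then there exist
quadratic polynomials `Q j` (for the `N - n + 2` indices `j` with `n - 2 ≤ j`, zero-based) in
the variables `p 1, …, p N` such that each `Q j` has nonzero coefficient of `p j ^ 2`, no
monomial `p l ^ 2` for any other index `l` with `n - 2 ≤ l`, and no mixed monomial
`p k * p l` with `k ≠ l`; and such that, for every tuple `p`, a polynomial `H` of degree at
most `2(n+N-1)` with leading coefficient `c`, `H (t i) = β i`, and `H (q j) = 0`,
`H' (q j) = e j * p j`, `H'' (q j) = a j * p j ^ 2 + b j * p j` exists if and only if all the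
`Q j` vanish at `p`. -/
theorem overdetermined_case_quadratic_constraints
    (n N : ℕ) (hn : 3 ≤ n) (hN : n - 2 < N)
    (t : Fin n → ℂ) (q : Fin N → ℂ)
    (ht : Function.Injective t) (hq : Function.Injective q)
    (htq : ∀ i j, t i ≠ q j)
    (c : ℂ) (β : Fin n → ℂ) (a b e : Fin N → ℂ)
    (ha : ∀ j, a j ≠ 0) (he : ∀ j, e j ≠ 0) :
    ∃ Q : Fin N → MvPolynomial (Fin N) ℂ,
      (∀ j : Fin N, n - 2 ≤ (j : ℕ) →
        (Q j).totalDegree ≤ 2 ∧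
        MvPolynomial.coeff (Finsupp.single j 2) (Q j) ≠ 0 ∧
        (∀ l : Fin N, n - 2 ≤ (l : ℕ) → l ≠ j →
          MvPolynomial.coeff (Finsupp.single l 2) (Q j) = 0) ∧
        (∀ k l : Fin N, k ≠ l →
          MvPolynomial.coeff (Finsupp.single k 1 + Finsupp.single l 1) (Q j) = 0)) ∧
      (∀ p : Fin N → ℂ,
        (∃ H : Polynomial ℂ,
          H.degree ≤ (2 * (n + N - 1) : ℕ) ∧
          H.coeff (2 * (n + N - 1)) = c ∧
          (∀ i, H.eval (t i) = β i) ∧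
          (∀ j, H.eval (q j) = 0 ∧
            (derivative H).eval (q j) = e j * p j ∧
            (derivative (derivative H)).eval (q j) = a j * p j ^ 2 + b j * p j)) ↔
        ∀ j : Fin N, n - 2 ≤ (j : ℕ) → MvPolynomial.eval p (Q j) = 0) := by
  classical
  have hle : n - 2 ≤ N := hN.le
  obtain ⟨R, hR1, hR2⟩ := interp n N hn hN t q ht hq htq
  refine ⟨fun j => Qpoly hle a b (Fder q j (R (d0vec c β)))
    (fun k => Fder q j (R (vvec e k))) (fun l => Fder q j (R (wvec l))) j, ?_, ?_⟩
  · intro j hj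
    refine ⟨Qpoly_totalDegree hle a b _ _ _ j, ?_, ?_, ?_⟩
    · rw [Qpoly_coeff_sq hle a b _ _ _ j j hj, if_pos rfl]
      exact neg_ne_zero.mpr (ha j)
    · intro l hl hlj
      rw [Qpoly_coeff_sq hle a b _ _ _ j l hl, if_neg hlj]
    · intro k l hkl
      exact Qpoly_coeff_mixed hle a b _ _ _ j k l hkl
  · intro p
    constructor
    · rintro ⟨H, hdeg, hcoeff, hti, hqj⟩
      have hdeg' : H.degree < ((2 * (n + N - 1) + 1 : ℕ) : WithBot ℕ) :=
        lt_of_le_of_lt hdeg (by exact_mod_cast Nat.lt_succ_self (2 * (n + N - 1)))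
      have hphi : philm n N hle t q H = dvec hle c β a b e p := by
        rw [philm_apply]
        funext i
        rcases i with _ | i | i | i | i
        · simpa [dvec] using hcoeff
        · simpa [dvec] using hti i
        · simpa [dvec] using (hqj i).1
        · simpa [dvec] using (hqj i).2.1
        · simpa [dvec] using (hqj (Fin.castLE hle i)).2.2
      have hHe : H = R (dvec hle c β a b e p) := hR2 H _ hdeg' hphi
      intro j hj
      rw [key_eval, ← hHe, Fder_apply, (hqj j).2.2]
      exact sub_self _
    · intro hQ
      have h1 := (hR1 (dvec hle c β a b e p)).1
      have h2 := (hR1 (dvec hle c β a b e p)).2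
      rw [philm_apply] at h2
      refine ⟨R (dvec hle c β a b e p), ?_, ?_, ?_, ?_⟩
      · exact deg_le_of_lt_succ _ _ h1
      · simpa [dvec] using congrFun h2 (Sum.inl ())
      · intro i
        simpa [dvec] using congrFun h2 (Sum.inr (Sum.inl i))
      · intro j
        refine ⟨?_, ?_, ?_⟩
        · simpa [dvec] using congrFun h2 (Sum.inr (Sum.inr (Sum.inl j)))
        · simpa [dvec] using congrFun h2 (Sum.inr (Sum.inr (Sum.inr (Sum.inl j))))
        · rcases lt_or_ge (j : ℕ) (n - 2) with hlt | hge
          · have h3 := congrFun h2 (Sum.inr (Sum.inr (Sum.inr (Sum.inr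
              (⟨(j : ℕ), hlt⟩ : Fin (n - 2))))))
            have hcast : Fin.castLE hle (⟨(j : ℕ), hlt⟩ : Fin (n - 2)) = j := by
              apply Fin.ext
              rfl
            simpa [dvec, hcast] using h3
          · have h0 := hQ j hge
            rw [key_eval] at h0
            have h4 := sub_eq_zero.mp h0
            rw [Fder_apply] at h4
            exact h4
end
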